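/- Let G be a finite simple graph with no isolated vertices and let H be the graph obtained from G by adding a new dominating vertex v (adjacent to every vertex of G). If {R, W1, W2} is a barbell partition of G, then {R ∪ {v}, W1, W2} is a barbell partition of H. -/

import Mathlib

open SimpleGraph

/-- A barbell partition of a graph `G`: a partition of the vertex set into
`R`, `W1`, `W2` with `W1, W2` nonempty, no edges between `W1` and `W2`, and
every vertex of `R` has a number of neighbors in each `Wi` different from 1. -/
def IsBarbellPartition {V : Type*} (G : SimpleGraph V) (R W1 W2 : Set V) : Prop :=
  R ∪ W1 ∪ W2 = Set.univ ∧ Disjoint R W1 ∧ Disjoint R W2 ∧ Disjoint W1 W2 ∧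
  W1.Nonempty ∧ W2.Nonempty ∧
  (∀ w1 ∈ W1, ∀ w2 ∈ W2, ¬ G.Adj w1 w2) ∧
  (∀ v ∈ R, (G.neighborSet v ∩ W1).ncard ≠ 1 ∧ (G.neighborSet v ∩ W2).ncard ≠ 1)

/-- `G` admits a barbell partition. -/
def HasBarbellPartition {V : Type*} (G : SimpleGraph V) : Prop :=
  ∃ R W1 W2 : Set V, IsBarbellPartition G R W1 W2

/-- A fort of `G`: a nonempty vertex set `F` such that no vertex outside `F`
has exactly one neighbor in `F`. -/
def IsFort {V : Type*} (G : SimpleGraph V) (F : Set V) : Prop :=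
  F.Nonempty ∧ ∀ v ∉ F, (G.neighborSet v ∩ F).ncard ≠ 1

/-- The graph obtained from `G` by adding a dominating vertex (`none`). -/
def addDomVertex {V : Type*} (G : SimpleGraph V) : SimpleGraph (Option V) where
  Adj x y :=
    match x, y with
    | some a, some b => G.Adj a b
    | some _, none => True
    | none, some _ => True
    | none, none => False
  symm := by
    constructor
    rintro (_ | a) (_ | b) h
    · exact h
    · trivial
    · trivial
    · exact h.symm
  loopless := by
    constructor
    rintro (_ | a) h
    · exact h
    · exact G.irrefl h

/-! Adding a dominating vertex `v` changes nothing among the old vertices, so the only new vertex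
of `R` to check is `v`, which sees all of `W1` and all of `W2`; hence we need `|W1|, |W2| ≠ 1`.
If `W1 = {w}`, a neighbour `u` of `w` lies neither in `W1` nor in `W2`, so `u ∈ R` has exactly
one neighbour in `W1`, which is impossible. -/

namespace IsBarbellPartition

variable {V : Type*} {G : SimpleGraph V} {R W1 W2 : Set V}

theorem symm (h : IsBarbellPartition G R W1 W2) : IsBarbellPartition G R W2 W1 := by
  obtain ⟨hcov, hRW1, hRW2, hW12, hW1, hW2, hnoadj, hR⟩ := h
  refine ⟨?_, hRW2, hRW1, hW12.symm, hW2, hW1, fun a ha b hb hab ↦ hnoadj b hb a ha hab.symm,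
    fun v hv ↦ (hR v hv).symm⟩
  rw [← hcov, Set.union_assoc, Set.union_assoc, Set.union_comm W2]

theorem ncard_left_ne_one (hiso : ∀ v, (G.neighborSet v).Nonempty)
    (h : IsBarbellPartition G R W1 W2) : W1.ncard ≠ 1 := by
  obtain ⟨hcov, -, -, -, -, -, hnoadj, hR⟩ := h
  intro hcard
  obtain ⟨w, rfl⟩ := Set.ncard_eq_one.mp hcard
  obtain ⟨u, hwu⟩ := hiso w
  have hu : u ∉ ({w} : Set V) := (G.ne_of_adj hwu).symm
  have huR : u ∈ R := by
    have : u ∈ R ∪ {w} ∪ W2 := hcov ▸ Set.mem_univ u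
    rcases this with (huR | huW1) | huW2
    · exact huR
    · exact absurd huW1 hu
    · exact absurd hwu (hnoadj w rfl u huW2)
  have : G.neighborSet u ∩ {w} = {w} :=
    Set.inter_eq_right.mpr (Set.singleton_subset_iff.mpr hwu.symm)
  exact (hR u huR).1 (by rw [this, Set.ncard_singleton])

theorem ncard_right_ne_one (hiso : ∀ v, (G.neighborSet v).Nonempty)
    (h : IsBarbellPartition G R W1 W2) : W2.ncard ≠ 1 :=
  h.symm.ncard_left_ne_one hiso

end IsBarbellPartition

namespace SimpleGraph

variable {V : Type*} (G : SimpleGraph V)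

theorem neighborSet_addDomVertex_none_inter_image_some (W : Set V) :
    (addDomVertex G).neighborSet none ∩ some '' W = some '' W :=
  Set.inter_eq_right.mpr <| by rintro _ ⟨b, -, rfl⟩; trivial

theorem neighborSet_addDomVertex_some_inter_image_some (r : V) (W : Set V) :
    (addDomVertex G).neighborSet (some r) ∩ some '' W = some '' (G.neighborSet r ∩ W) := by
  ext (_ | b)
  · simp
  · simp only [Set.mem_inter_iff, Set.mem_image, Option.some_inj, exists_eq_right]
    rfl

end SimpleGraph

theorem Set.disjoint_insert_none_image_some {α : Type*} {s t : Set α} (h : Disjoint s t) :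
    Disjoint (insert none (some '' s)) (some '' t) :=
  Set.disjoint_insert_left.mpr
    ⟨by simp, (Set.disjoint_image_iff (Option.some_injective _)).mpr h⟩

theorem addDomVertex_barbellPartition_general {V : Type*} (G : SimpleGraph V)
    (hiso : ∀ v : V, (G.neighborSet v).Nonempty)
    (R W1 W2 : Set V) (h : IsBarbellPartition G R W1 W2) :
    IsBarbellPartition (addDomVertex G)
      (insert none (some '' R)) (some '' W1) (some '' W2) := by
  have hW1card := h.ncard_left_ne_one hiso
  have hW2card := h.ncard_right_ne_one hiso
  obtain ⟨hcov, hRW1, hRW2, hW12, hW1, hW2, hnoadj, hR⟩ := h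
  have hinj := Option.some_injective V
  refine ⟨?_, Set.disjoint_insert_none_image_some hRW1, Set.disjoint_insert_none_image_some hRW2,
    (Set.disjoint_image_iff hinj).mpr hW12, hW1.image _, hW2.image _, ?_, ?_⟩
  · rw [Set.insert_union, Set.insert_union, ← Set.image_union, ← Set.image_union, hcov,
      Set.image_univ, Set.insert_none_range_some]
  · rintro _ ⟨a, ha, rfl⟩ _ ⟨b, hb, rfl⟩
    exact hnoadj a ha b hb
  · rintro _ (rfl | ⟨r, hr, rfl⟩)
    · simp only [neighborSet_addDomVertex_none_inter_image_some,
        Set.ncard_image_of_injective _ hinj]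
      exact ⟨hW1card, hW2card⟩
    · simp only [neighborSet_addDomVertex_some_inter_image_some,
        Set.ncard_image_of_injective _ hinj]
      exact hR r hr

/-- If `G` has no isolated vertices and `{R, W1, W2}` is a barbell partition of
`G`, then adding the dominating vertex to `R` gives a barbell partition of the
graph obtained from `G` by adding a dominating vertex. -/
theorem addDomVertex_barbellPartition {V : Type*} [Fintype V] (G : SimpleGraph V)
    (hiso : ∀ v : V, (G.neighborSet v).Nonempty)
    (R W1 W2 : Set V) (h : IsBarbellPartition G R W1 W2) :
    IsBarbellPartition (addDomVertex G)
      (insert none (some '' R)) (some '' W1) (some '' W2) :=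
  addDomVertex_barbellPartition_general G hiso R W1 W2 h
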